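/- arXiv:2012.02385 — 3 statements merged into one kernel-verified Lean document; each statement's English description precedes it below -/
import Mathlib

section
/- (Jiang and Tanner, 1999) For each n ∈ ℕ, p ∈ [1,∞) and ε > 0, there exist soft-max gating parameters γ = (a_1,…,a_{n^d}, b_1,…,b_{n^d}) ∈ ℝ^{n^d} × (ℝ^d)^{n^d} such that sup_{k∈[n^d]} ( ∫_{[0,1]^d} | 1_{X_k^n}(x) − Gate_k(x;γ) |^p dλ(x) )^{1/p} ≤ ε, where 1_{X_k^n} is the indicator function of the cell X_k^n of the uniform partition of [0,1]^d. -/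
open MeasureTheory Filter Finset

/-- Soft-max gating function with `K` components (index type `ι`) on `ℝ^d`:
`Gate_k(x) = exp(a_k + b_kᵀx) / Σ_l exp(a_l + b_lᵀx)`. -/
noncomputable def softmaxGate {ι : Type*} [Fintype ι] {d : ℕ}
    (a : ι → ℝ) (b : ι → Fin d → ℝ) (k : ι) (x : Fin d → ℝ) : ℝ :=
  Real.exp (a k + ∑ i, b k i * x i) / ∑ l, Real.exp (a l + ∑ i, b l i * x i)

/-- Soft-max gating function on `ℝ` (the case `d = 1`). -/
noncomputable def softmaxGate1 {ι : Type*} [Fintype ι]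
    (a b : ι → ℝ) (k : ι) (x : ℝ) : ℝ :=
  Real.exp (a k + b k * x) / ∑ l, Real.exp (a l + b l * x)

/-- Location-scale density `g_ψ(y; μ, σ) = σ^{-q} ψ((y - μ)/σ)` on `ℝ^q`. -/
noncomputable def locScale {q : ℕ} (ψ : (Fin q → ℝ) → ℝ)
    (μ : Fin q → ℝ) (σ : ℝ) (y : Fin q → ℝ) : ℝ :=
  (1 / σ ^ q) * ψ fun i => (y i - μ i) / σ

/-- Multivariate Gaussian density
`φ(x; ν, Σ) = det(2πΣ)^{-1/2} exp(-(x-ν)ᵀ Σ⁻¹ (x-ν) / 2)` on `ℝ^d`. -/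
noncomputable def gaussPDF {d : ℕ} (ν : Fin d → ℝ)
    (S : Matrix (Fin d) (Fin d) ℝ) (x : Fin d → ℝ) : ℝ :=
  (Real.sqrt ((2 * Real.pi) ^ d * S.det))⁻¹ *
    Real.exp (-dotProduct (fun i => x i - ν i) (Matrix.mulVec S⁻¹ fun i => x i - ν i) / 2)

/-- The unit cube `[0,1]^d`. -/
def unitCube (d : ℕ) : Set (Fin d → ℝ) := {x | ∀ i, x i ∈ Set.Icc (0 : ℝ) 1}

/-- The `j`-th interval of the uniform partition of `[0,1]` into `n` pieces:
`[j/n, (j+1)/n)` for `j + 1 < n`, and `[(n-1)/n, 1]` for the last one. -/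
def unifInterval (n : ℕ) (j : Fin n) : Set ℝ :=
  if (j : ℕ) + 1 = n then Set.Icc ((j : ℝ) / n) 1
  else Set.Ico ((j : ℝ) / n) (((j : ℝ) + 1) / n)

/-- The cell `X_k^n = ∏_i I_{k_i}^n` of the uniform partition of `[0,1]^d`,
indexed by `k : Fin d → Fin n`. -/
def unifCell (d n : ℕ) (k : Fin d → Fin n) : Set (Fin d → ℝ) :=
  {x | ∀ i, x i ∈ unifInterval n (k i)}

/-! For `x` inside the cell `k₀`, the affine score `Σ_i (k_i x_i - k_i (k_i + 1) / (2n))` is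
maximised exactly at `k = k₀`. Scaling all gate parameters by `s → ∞` therefore makes the
soft-max gate converge to the indicator of the cell at every point off the grid hyperplanes,
i.e. almost everywhere. Gates and indicators take values in `[0,1]`, so dominated convergence on
`[0,1]^d` sends each `L^p` error to `0`, and one `s` works for the finitely many cells at once. -/

open Topology

section Softmax

variable {ι : Type*} [Fintype ι]

theorem tendsto_exp_mul_div_sum_exp [DecidableEq ι] {f : ι → ℝ} {k₀ : ι}
    (hmax : ∀ l ≠ k₀, f l < f k₀) (k : ι) :
    Tendsto (fun s : ℝ => Real.exp (s * f k) / ∑ l, Real.exp (s * f l)) atTop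
      (𝓝 (if k = k₀ then 1 else 0)) := by
  have hterm : ∀ l, Tendsto (fun s : ℝ => Real.exp (s * (f l - f k₀))) atTop
      (𝓝 (if l = k₀ then 1 else 0)) := by
    intro l
    by_cases hl : l = k₀
    · simp [hl]
    · rw [if_neg hl]
      exact Real.tendsto_exp_atBot.comp
        (tendsto_id.atTop_mul_const_of_neg (sub_neg.2 (hmax l hl)))
  have hsum : Tendsto (fun s : ℝ => ∑ l, Real.exp (s * (f l - f k₀))) atTop (𝓝 1) := by
    simpa using tendsto_finsetSum univ fun l _ => hterm l
  have hshift : ∀ s : ℝ, Real.exp (s * f k) / ∑ l, Real.exp (s * f l)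
      = Real.exp (s * (f k - f k₀)) / ∑ l, Real.exp (s * (f l - f k₀)) := by
    intro s
    simp only [mul_sub, Real.exp_sub, ← sum_div]
    rw [div_div_div_cancel_right₀ (Real.exp_ne_zero _)]
  simpa [hshift, Pi.div_def] using (hterm k).div hsum one_ne_zero

variable {d : ℕ}

theorem softmaxGate_smul (s : ℝ) (a : ι → ℝ) (b : ι → Fin d → ℝ) (k : ι) (x : Fin d → ℝ) :
    softmaxGate (s • a) (s • b) k x
      = Real.exp (s * (a k + ∑ i, b k i * x i)) /
          ∑ l, Real.exp (s * (a l + ∑ i, b l i * x i)) := by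
  simp only [softmaxGate, Pi.smul_apply, smul_eq_mul, mul_add, mul_sum, mul_assoc]

variable [Nonempty ι]

theorem softmaxGate_mem_Icc (a : ι → ℝ) (b : ι → Fin d → ℝ) (k : ι) (x : Fin d → ℝ) :
    softmaxGate a b k x ∈ Set.Icc 0 1 := by
  have hpos : 0 < ∑ l, Real.exp (a l + ∑ i, b l i * x i) :=
    sum_pos (fun l _ => Real.exp_pos _) univ_nonempty
  refine ⟨div_nonneg (Real.exp_pos _).le hpos.le, (div_le_one hpos).2 ?_⟩
  exact single_le_sum (f := fun l => Real.exp (a l + ∑ i, b l i * x i))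
    (fun l _ => (Real.exp_pos _).le) (mem_univ k)

theorem continuous_softmaxGate (a : ι → ℝ) (b : ι → Fin d → ℝ) (k : ι) :
    Continuous (softmaxGate a b k) := by
  unfold softmaxGate
  exact Continuous.div (by fun_prop) (by fun_prop) fun x =>
    (sum_pos (fun l _ => Real.exp_pos _) univ_nonempty).ne'

end Softmax

theorem tendsto_integral_abs_sub_rpow_of_tendsto_ae {α : Type*} [MeasurableSpace α]
    {μ : Measure α} [IsFiniteMeasure μ] {p : ℝ} (hp : 0 < p) {F : ℝ → α → ℝ} {f : α → ℝ}
    (hF : ∀ s, AEStronglyMeasurable (F s) μ) (hF01 : ∀ s x, F s x ∈ Set.Icc 0 1)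
    (hlim : ∀ᵐ x ∂μ, Tendsto (fun s => F s x) atTop (𝓝 (f x))) :
    Tendsto (fun s => ∫ x, |f x - F s x| ^ p ∂μ) atTop (𝓝 0) := by
  have hf : AEStronglyMeasurable f μ := aestronglyMeasurable_of_tendsto_ae atTop hF hlim
  have hf01 : ∀ᵐ x ∂μ, f x ∈ Set.Icc 0 1 := hlim.mono fun x hx =>
    isClosed_Icc.mem_of_tendsto hx (Eventually.of_forall fun s => hF01 s x)
  have hpt : ∀ᵐ x ∂μ, Tendsto (fun s => |f x - F s x| ^ p) atTop (𝓝 0) :=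
    hlim.mono fun x hx => by
      have hdiff : Tendsto (fun s => f x - F s x) atTop (𝓝 0) := by
        simpa using (tendsto_const_nhds (x := f x)).sub hx
      exact ((tendsto_zero_iff_abs_tendsto_zero _).1 hdiff).rpow_const_nhds_zero hp
  have hbound : ∀ s, ∀ᵐ x ∂μ, ‖|f x - F s x| ^ p‖ ≤ 1 := fun s => hf01.mono fun x hx => by
    have h1 : |f x - F s x| ≤ 1 :=
      abs_le.2 ⟨by linarith [(hF01 s x).2, hx.1], by linarith [(hF01 s x).1, hx.2]⟩
    rw [Real.norm_of_nonneg (by positivity)]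
    exact Real.rpow_le_one (abs_nonneg _) h1 hp.le
  simpa using tendsto_integral_filter_of_dominated_convergence (fun _ => 1)
    (Eventually.of_forall fun s =>
      ((hf.sub (hF s)).aemeasurable.abs.pow_const p).aestronglyMeasurable)
    (Eventually.of_forall hbound) (integrable_const 1) hpt

/-- The increments `cellScore n (j + 1) t - cellScore n j t = t - (j + 1) / n` change sign once,
so `j ↦ cellScore n j t` peaks at the `j` with `t ∈ (j / n, (j + 1) / n)`. -/
noncomputable def cellScore (n j : ℕ) (t : ℝ) : ℝ := j * t - j * (j + 1) / (2 * n)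

theorem cellScore_lt_cellScore {n j m : ℕ} (hn : 0 < n) (hjm : j ≠ m) {t : ℝ}
    (ht : t ∈ Set.Ioo ((m : ℝ) / n) ((m + 1) / n)) : cellScore n j t < cellScore n m t := by
  have hn' : (0 : ℝ) < n := by exact_mod_cast hn
  obtain ⟨hlo, hhi⟩ := ht
  rw [div_lt_iff₀ hn'] at hlo
  rw [lt_div_iff₀ hn'] at hhi
  have hsplit : cellScore n m t - cellScore n j t
      = ((m : ℝ) - j) * (2 * (t * n) - m - j - 1) / (2 * n) := by
    unfold cellScore; field_simp; ring
  have hpos : 0 < ((m : ℝ) - j) * (2 * (t * n) - m - j - 1) := by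
    rcases hjm.lt_or_gt with h | h
    · have h' : (j : ℝ) + 1 ≤ m := by exact_mod_cast h
      nlinarith
    · have h' : (m : ℝ) + 1 ≤ j := by exact_mod_cast h
      nlinarith
  have := div_pos hpos (by positivity : (0 : ℝ) < 2 * n)
  linarith

theorem sum_lt_sum_of_coordwise_strict_max {κ α : Type*} [Fintype κ] (g : κ → α → ℝ)
    {k₀ l : κ → α} (hmax : ∀ i, ∀ j ≠ k₀ i, g i j < g i (k₀ i)) (hl : l ≠ k₀) :
    ∑ i, g i (l i) < ∑ i, g i (k₀ i) := by
  obtain ⟨i, hi⟩ := Function.ne_iff.1 hl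
  refine sum_lt_sum (fun i _ => ?_) ⟨i, mem_univ i, hmax i _ hi⟩
  by_cases h : l i = k₀ i
  · rw [h]
  · exact (hmax i _ h).le

def openUnifCell (d n : ℕ) (k : Fin d → Fin n) : Set (Fin d → ℝ) :=
  {x | ∀ i, x i ∈ Set.Ioo ((k i : ℝ) / n) ((k i + 1) / n)}

theorem unifInterval_subset_Icc {n : ℕ} (j : Fin n) :
    unifInterval n j ⊆ Set.Icc ((j : ℝ) / n) ((j + 1) / n) := by
  unfold unifInterval
  split_ifs with h
  · have hlast : ((j : ℝ) + 1) / n = 1 := by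
      rw [div_eq_one_iff_eq (by exact_mod_cast j.pos.ne')]; exact_mod_cast h
    rw [hlast]
  · exact Set.Ico_subset_Icc_self

theorem Ioo_subset_unifInterval {n : ℕ} (j : Fin n) :
    Set.Ioo ((j : ℝ) / n) ((j + 1) / n) ⊆ unifInterval n j := by
  unfold unifInterval
  split_ifs with h
  · have hlast : ((j : ℝ) + 1) / n = 1 := by
      rw [div_eq_one_iff_eq (by exact_mod_cast j.pos.ne')]; exact_mod_cast h
    rw [hlast]
    exact Set.Ioo_subset_Icc_self
  · exact Set.Ioo_subset_Ico_self

theorem eq_of_mem_unifInterval_of_mem_Ioo {n : ℕ} {j m : Fin n} {t : ℝ}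
    (hj : t ∈ unifInterval n j) (hm : t ∈ Set.Ioo ((m : ℝ) / n) ((m + 1) / n)) : j = m := by
  have hn : (0 : ℝ) < n := by exact_mod_cast j.pos
  obtain ⟨hj₁, hj₂⟩ := unifInterval_subset_Icc j hj
  have h₁ : (j : ℝ) < m + 1 := by
    simpa [div_lt_div_iff_of_pos_right hn] using hj₁.trans_lt hm.2
  have h₂ : (m : ℝ) < j + 1 := by
    simpa [div_lt_div_iff_of_pos_right hn] using hm.1.trans_le hj₂
  norm_cast at h₁ h₂
  exact Fin.ext (by omega)

theorem indicator_unifCell_of_mem_openUnifCell {d n : ℕ} [DecidableEq (Fin d → Fin n)]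
    {k₀ : Fin d → Fin n} {x : Fin d → ℝ} (hx : x ∈ openUnifCell d n k₀) (k : Fin d → Fin n) :
    (unifCell d n k).indicator (fun _ => (1 : ℝ)) x = if k = k₀ then 1 else 0 := by
  split_ifs with hk
  · exact Set.indicator_of_mem (hk ▸ fun i => Ioo_subset_unifInterval (k₀ i) (hx i)) _
  · exact Set.indicator_of_notMem (fun (hmem : ∀ i, x i ∈ unifInterval n (k i)) =>
      hk (funext fun i => eq_of_mem_unifInterval_of_mem_Ioo (hmem i) (hx i))) _

theorem exists_mem_Ioo_of_forall_ne_div {n : ℕ} (hn : 0 < n) {t : ℝ} (ht : t ∈ Set.Icc 0 1)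
    (hne : ∀ j : Fin (n + 1), t ≠ j / n) :
    ∃ m : Fin n, t ∈ Set.Ioo ((m : ℝ) / n) ((m + 1) / n) := by
  have hn' : (0 : ℝ) < n := by exact_mod_cast hn
  have htn : 0 ≤ t * n := by nlinarith [ht.1]
  set m := ⌊t * n⌋₊
  have hm_le : (m : ℝ) ≤ t * n := Nat.floor_le htn
  have hm_lt : t * n < m + 1 := Nat.lt_floor_add_one _
  have ht1 : t < 1 := lt_of_le_of_ne ht.2 (by simpa [hn'.ne'] using hne (Fin.last n))
  have hm_lt_n : m < n := (Nat.floor_lt htn).2 (by nlinarith)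
  have hm_ne : (m : ℝ) ≠ t * n := fun h =>
    hne ⟨m, by omega⟩ (by field_simp; linarith)
  refine ⟨⟨m, hm_lt_n⟩, ?_, ?_⟩
  · rw [div_lt_iff₀ hn']; exact lt_of_le_of_ne hm_le hm_ne
  · rw [lt_div_iff₀ hn']; exact hm_lt

theorem unitCube_eq_Icc (d : ℕ) : unitCube d = Set.Icc 0 1 := by
  ext x
  simp [unitCube, Pi.le_def, forall_and]

instance (d : ℕ) : IsFiniteMeasure (volume.restrict (unitCube d)) :=
  isFiniteMeasure_restrict.2 (unitCube_eq_Icc d ▸ isCompact_Icc.measure_ne_top)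

theorem ae_restrict_unitCube_exists_mem_openUnifCell (d : ℕ) {n : ℕ} (hn : 0 < n) :
    ∀ᵐ x ∂volume.restrict (unitCube d), ∃ k, x ∈ openUnifCell d n k := by
  have hoff : ∀ᵐ x : Fin d → ℝ, ∀ i, ∀ j : Fin (n + 1), x i ≠ j / n := by
    simp only [ae_all_iff]
    exact fun i j => Measure.ae_eval_ne _ i _
  filter_upwards [ae_restrict_of_ae hoff,
    ae_restrict_mem (unitCube_eq_Icc d ▸ measurableSet_Icc)] with x hx hxc
  choose k hk using fun i => exists_mem_Ioo_of_forall_ne_div hn (hxc i) (hx i)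
  exact ⟨k, hk⟩

section CellGate

variable {d n : ℕ}

noncomputable def cellGateBias (n : ℕ) (k : Fin d → Fin n) : ℝ :=
  -∑ i, ((k i : ℕ) : ℝ) * (k i + 1) / (2 * n)

def cellGateSlope (k : Fin d → Fin n) (i : Fin d) : ℝ := k i

theorem cellGateBias_add_sum_mul (k : Fin d → Fin n) (x : Fin d → ℝ) :
    cellGateBias n k + ∑ i, cellGateSlope k i * x i = ∑ i, cellScore n (k i) (x i) := by
  simp only [cellGateBias, cellGateSlope, cellScore, sum_sub_distrib]
  ring

theorem tendsto_softmaxGate_cellGate (hn : 0 < n) {k₀ : Fin d → Fin n} {x : Fin d → ℝ}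
    (hx : x ∈ openUnifCell d n k₀) (k : Fin d → Fin n) :
    Tendsto (fun s : ℝ => softmaxGate (s • cellGateBias n) (s • cellGateSlope) k x) atTop
      (𝓝 ((unifCell d n k).indicator (fun _ => 1) x)) := by
  classical
  have hmax : ∀ l ≠ k₀, cellGateBias n l + ∑ i, cellGateSlope l i * x i
      < cellGateBias n k₀ + ∑ i, cellGateSlope k₀ i * x i := by
    intro l hl
    simp only [cellGateBias_add_sum_mul]
    exact sum_lt_sum_of_coordwise_strict_max (fun i (j : Fin n) => cellScore n j (x i))
      (fun i j hj => cellScore_lt_cellScore hn (Fin.val_injective.ne hj) (hx i)) hl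
  simpa only [softmaxGate_smul, indicator_unifCell_of_mem_openUnifCell hx] using
    tendsto_exp_mul_div_sum_exp (f := fun l => cellGateBias n l + ∑ i, cellGateSlope l i * x i)
      hmax k

end CellGate

/-- Jiang and Tanner, 1999: soft-max gates can approximate the indicator
functions of the cells of the uniform partition of `[0,1]^d` into `n^d` cells, uniformly
over all cells, in `L^p` norm on `[0,1]^d`. The cells are indexed by `k : Fin d → Fin n`. -/
theorem softmax_gate_approximates_indicators {d : ℕ} (n : ℕ) (hn : 0 < n)
    (p : ℝ) (hp : 1 ≤ p) (ε : ℝ) (hε : 0 < ε) :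
    ∃ (a : (Fin d → Fin n) → ℝ) (b : (Fin d → Fin n) → Fin d → ℝ),
      ∀ k : Fin d → Fin n,
        (∫ x in unitCube d,
            |Set.indicator (unifCell d n k) (fun _ => (1 : ℝ)) x - softmaxGate a b k x| ^ p)
          ^ (1 / p) ≤ ε := by
  have : Nonempty (Fin n) := ⟨⟨0, hn⟩⟩
  have hnorm : ∀ k, Tendsto (fun s : ℝ => (∫ x in unitCube d,
      |(unifCell d n k).indicator (fun _ => (1 : ℝ)) x
        - softmaxGate (s • cellGateBias n) (s • cellGateSlope) k x| ^ p) ^ (1 / p))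
      atTop (𝓝 0) := fun k =>
    (tendsto_integral_abs_sub_rpow_of_tendsto_ae (by linarith)
      (fun s => (continuous_softmaxGate _ _ k).aestronglyMeasurable)
      (fun s x => softmaxGate_mem_Icc _ _ k x)
      ((ae_restrict_unitCube_exists_mem_openUnifCell d hn).mono fun x ⟨_, hx⟩ =>
        tendsto_softmaxGate_cellGate hn hx k)).rpow_const_nhds_zero (by positivity)
  obtain ⟨s, hs⟩ := (eventually_all.2 fun k => (hnorm k).eventually (eventually_le_nhds hε)).exists
  exact ⟨s • cellGateBias n, s • cellGateSlope, hs⟩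
end

section
/- Let X = [0,1]. For each n ∈ ℕ there exists a sequence of soft-max gating parameter vectors {γ_l}_{l∈ℕ} ⊂ ℝ^n × ℝ^n such that, as l → ∞, Gate_k(·;γ_l) converges to the indicator function 1_{I_k^n} almost uniformly on [0,1], simultaneously for all k ∈ [n]: for every δ > 0 there exists a measurable set B ⊂ [0,1] with λ(B) < δ such that for every k ∈ [n], Gate_k(·;γ_l) → 1_{I_k^n} uniformly on [0,1] ∖ B. -/
open MeasureTheory Filter Finset

/-! With `a_k = -l k (k + 1)` and `b_k = 2 n l k`, the exponent of the `k`-th gate at `x` is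
`l (2 k t - k (k + 1)) = l ((t - 1/2)² - (t - k - 1/2)²)` with `t = n x`, so the `k`-th gate wins
exactly where `t ∈ [k, k + 1]`, i.e. on `I_k`. Away from the breakpoints `j / n` (outside `ε`-balls
of total length `< δ`) its exponent beats every other one by at least `2 n ε l`, and a soft-max
whose winner leads by a margin `c` is within `K e^{-c}` of the winner's indicator. -/

open Real Set Topology

theorem tendstoUniformlyOn_of_dist_le {ι α β : Type*} [PseudoMetricSpace β] {l : Filter ι}
    {F : ι → α → β} {f : α → β} {s : Set α} {u : ι → ℝ} (hu : Tendsto u l (𝓝 0))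
    (h : ∀ i, ∀ x ∈ s, dist (f x) (F i x) ≤ u i) : TendstoUniformlyOn F f l s :=
  Metric.tendstoUniformlyOn_iff.2 fun _ hε =>
    (hu.eventually (gt_mem_nhds hε)).mono fun i hi x hx => (h i x hx).trans_lt hi

section Softmax

variable {ι : Type*} [Fintype ι] {s : ι → ℝ} {i₀ : ι} {c : ℝ}

theorem exp_le_sum_exp (i : ι) : exp (s i) ≤ ∑ j, exp (s j) :=
  single_le_sum (fun j _ => (exp_pos (s j)).le) (mem_univ i)

theorem exp_div_sum_exp_le_of_gap (hgap : ∀ j ≠ i₀, s j + c ≤ s i₀) {k : ι} (hk : k ≠ i₀) :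
    exp (s k) / ∑ j, exp (s j) ≤ exp (-c) := by
  rw [div_le_iff₀ ((exp_pos _).trans_le (exp_le_sum_exp i₀))]
  calc exp (s k) ≤ exp (-c) * exp (s i₀) := by
        rw [← exp_add]
        exact exp_le_exp.2 (by linarith [hgap k hk])
    _ ≤ exp (-c) * ∑ j, exp (s j) := by gcongr; exact exp_le_sum_exp i₀

theorem one_sub_exp_div_sum_exp_le_of_gap (hgap : ∀ j ≠ i₀, s j + c ≤ s i₀) :
    1 - exp (s i₀) / ∑ j, exp (s j) ≤ Fintype.card ι * exp (-c) := by
  classical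
  have hpos : 0 < ∑ j, exp (s j) := (exp_pos _).trans_le (exp_le_sum_exp i₀)
  have hone : ∑ k, exp (s k) / ∑ j, exp (s j) = 1 := by rw [← sum_div, div_self hpos.ne']
  rw [← hone, ← add_sum_erase _ _ (mem_univ i₀), add_sub_cancel_left]
  calc ∑ k ∈ univ.erase i₀, exp (s k) / ∑ j, exp (s j)
      ≤ ∑ _k ∈ univ.erase i₀, exp (-c) :=
        sum_le_sum fun k hk => exp_div_sum_exp_le_of_gap hgap (ne_of_mem_erase hk)
    _ ≤ ∑ _k : ι, exp (-c) := sum_le_sum_of_subset_of_nonneg (erase_subset _ _)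
        fun _ _ _ => (exp_pos _).le
    _ = Fintype.card ι * exp (-c) := by rw [sum_const, nsmul_eq_mul, card_univ]

theorem abs_exp_div_sum_exp_sub_ite_le_of_gap [DecidableEq ι]
    (hgap : ∀ j ≠ i₀, s j + c ≤ s i₀) (k : ι) :
    |exp (s k) / ∑ j, exp (s j) - if k = i₀ then 1 else 0| ≤ Fintype.card ι * exp (-c) := by
  have hpos : 0 < ∑ j, exp (s j) := (exp_pos _).trans_le (exp_le_sum_exp i₀)
  split_ifs with hk
  · subst hk
    rw [abs_sub_comm, abs_of_nonneg (sub_nonneg.2 (div_le_one_of_le₀ (exp_le_sum_exp k) hpos.le))]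
    exact one_sub_exp_div_sum_exp_le_of_gap hgap
  · have hcard : (1 : ℝ) ≤ Fintype.card ι := by exact_mod_cast Fintype.card_pos_iff.2 ⟨k⟩
    rw [sub_zero, abs_of_nonneg (by positivity)]
    calc exp (s k) / ∑ j, exp (s j) ≤ exp (-c) := exp_div_sum_exp_le_of_gap hgap hk
      _ ≤ Fintype.card ι * exp (-c) := le_mul_of_one_le_left (exp_pos _).le hcard

end Softmax

section Partition

variable {n : ℕ} {j k : Fin n} {x : ℝ}

theorem le_mul_of_mem_unifInterval (hx : x ∈ unifInterval n k) : (k : ℝ) ≤ n * x := by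
  have hn : (0 : ℝ) < n := by exact_mod_cast k.pos
  have hlo : (k : ℝ) / n ≤ x := by
    unfold unifInterval at hx
    split_ifs at hx
    exacts [hx.1, hx.1]
  rwa [div_le_iff₀ hn, mul_comm] at hlo

theorem mul_lt_of_mem_unifInterval (hx : x ∈ unifInterval n k) (hk : (k : ℕ) + 1 < n) :
    n * x < k + 1 := by
  have hn : (0 : ℝ) < n := by exact_mod_cast k.pos
  unfold unifInterval at hx
  rw [if_neg hk.ne] at hx
  rw [mul_comm, ← lt_div_iff₀ hn]
  exact hx.2

theorem eq_of_mem_unifInterval (hj : x ∈ unifInterval n j) (hk : x ∈ unifInterval n k) :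
    j = k := by
  have not_lt_of_mem :
      ∀ {j k : Fin n}, x ∈ unifInterval n j → x ∈ unifInterval n k → ¬ (j : ℕ) < k :=
    fun {j k} hj hk hjk => by
      have : ((j : ℕ) : ℝ) + 1 ≤ (k : ℕ) := by exact_mod_cast hjk
      linarith [mul_lt_of_mem_unifInterval hj (by omega), le_mul_of_mem_unifInterval hk]
  exact Fin.ext (le_antisymm (not_lt.1 (not_lt_of_mem hk hj)) (not_lt.1 (not_lt_of_mem hj hk)))

theorem exists_mem_unifInterval [NeZero n] (hx : x ∈ Icc (0 : ℝ) 1) :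
    ∃ k : Fin n, x ∈ unifInterval n k := by
  have hn : (0 : ℝ) < n := by exact_mod_cast (NeZero.pos n)
  have hnx : 0 ≤ (n : ℝ) * x := mul_nonneg hn.le hx.1
  refine ⟨⟨min ⌊(n : ℝ) * x⌋₊ (n - 1), by have := NeZero.pos n; omega⟩, ?_⟩
  have hlo : ((min ⌊(n : ℝ) * x⌋₊ (n - 1) : ℕ) : ℝ) ≤ n * x :=
    (Nat.cast_le.2 (min_le_left _ _)).trans (Nat.floor_le hnx)
  unfold unifInterval
  split_ifs with hlast
  · exact ⟨by rw [div_le_iff₀ hn]; linarith, hx.2⟩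
  · have hfloor : min ⌊(n : ℝ) * x⌋₊ (n - 1) = ⌊(n : ℝ) * x⌋₊ := by
      have : min ⌊(n : ℝ) * x⌋₊ (n - 1) + 1 ≠ n := hlast
      omega
    refine ⟨by rw [div_le_iff₀ hn]; linarith, ?_⟩
    rw [lt_div_iff₀ hn]
    simp only [hfloor]
    linarith [Nat.lt_floor_add_one ((n : ℝ) * x)]

theorem indicator_unifInterval_eq_ite (hx : x ∈ unifInterval n j) (k : Fin n) :
    (unifInterval n k).indicator (fun _ => (1 : ℝ)) x = if k = j then 1 else 0 := by
  split_ifs with hk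
  · exact indicator_of_mem (hk ▸ hx) _
  · exact indicator_of_notMem (fun hx' => hk (eq_of_mem_unifInterval hx' hx)) _

end Partition

section Score

def gateScore (k : ℕ) (t : ℝ) : ℝ := 2 * k * t - k * (k + 1)

variable {j k : ℕ} {t m : ℝ}

theorem gateScore_add_le_of_lt (hm : 0 ≤ m) (hjk : j < k) (ht : k + m ≤ t) :
    gateScore j t + 2 * m ≤ gateScore k t := by
  have hjk' : (j : ℝ) + 1 ≤ k := by exact_mod_cast hjk
  unfold gateScore
  nlinarith [mul_nonneg (by linarith : (0 : ℝ) ≤ k - j) (by linarith : (0 : ℝ) ≤ t - k - m),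
    mul_nonneg (by linarith : (0 : ℝ) ≤ k - j - 1) (by linarith : (0 : ℝ) ≤ k - j),
    mul_nonneg hm (by linarith : (0 : ℝ) ≤ k - j - 1)]

theorem gateScore_add_le_of_gt (hm : 0 ≤ m) (hkj : k < j) (ht : t ≤ k + 1 - m) :
    gateScore j t + 2 * m ≤ gateScore k t := by
  have hkj' : (k : ℝ) + 1 ≤ j := by exact_mod_cast hkj
  unfold gateScore
  nlinarith [mul_nonneg (by linarith : (0 : ℝ) ≤ j - k) (by linarith : (0 : ℝ) ≤ k + 1 - m - t),
    mul_nonneg (by linarith : (0 : ℝ) ≤ j - k - 1) (by linarith : (0 : ℝ) ≤ j - k),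
    mul_nonneg hm (by linarith : (0 : ℝ) ≤ j - k - 1)]

end Score

section Breakpoints

variable {n : ℕ} {ε x : ℝ}

def nearBreakpoints (n : ℕ) (ε : ℝ) : Set ℝ :=
  Icc 0 1 ∩ ⋃ j ∈ Finset.Ico 1 n, Metric.ball ((j : ℝ) / n) ε

theorem measurableSet_nearBreakpoints : MeasurableSet (nearBreakpoints n ε) :=
  measurableSet_Icc.inter <|
    .biUnion (Finset.Ico 1 n).countable_toSet fun _ _ => measurableSet_ball

theorem volume_nearBreakpoints_le : volume (nearBreakpoints n ε) ≤ n * ENNReal.ofReal (2 * ε) :=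
  calc volume (nearBreakpoints n ε)
      ≤ ∑ j ∈ Finset.Ico 1 n, volume (Metric.ball ((j : ℝ) / n) ε) :=
        (measure_mono inter_subset_right).trans (measure_biUnion_finset_le _ _)
    _ = (n - 1 : ℕ) * ENNReal.ofReal (2 * ε) := by
        simp only [Real.volume_ball, sum_const, Nat.card_Ico, nsmul_eq_mul]
    _ ≤ n * ENNReal.ofReal (2 * ε) := by gcongr; exact_mod_cast Nat.sub_le n 1

theorem volume_nearBreakpoints_lt {δ : ℝ} (hδ : 0 < δ) :
    volume (nearBreakpoints n (δ / (2 * (n + 1)))) < ENNReal.ofReal δ := by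
  refine volume_nearBreakpoints_le.trans_lt ?_
  rw [← ENNReal.ofReal_natCast, ← ENNReal.ofReal_mul n.cast_nonneg,
    ENNReal.ofReal_lt_ofReal_iff hδ, mul_div_assoc', mul_div_mul_left _ _ two_ne_zero,
    ← mul_div_assoc, div_lt_iff₀ (by positivity)]
  linarith

theorem mul_le_abs_sub_of_notMem_nearBreakpoints (hx : x ∉ nearBreakpoints n ε)
    (hx₀ : x ∈ Icc (0 : ℝ) 1) {j : ℕ} (hj : j ∈ Finset.Ico 1 n) :
    n * ε ≤ |n * x - j| := by
  have hn : (0 : ℝ) < n := by have := (Finset.mem_Ico.1 hj); exact_mod_cast (by omega : 0 < n)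
  have hfar : ε ≤ |x - j / n| := by
    by_contra! h
    exact hx ⟨hx₀, mem_biUnion hj (by rwa [Metric.mem_ball, Real.dist_eq])⟩
  calc n * ε ≤ n * |x - j / n| := by gcongr
    _ = |n * x - j| := by
        rw [← abs_of_pos hn, ← abs_mul, abs_of_pos hn, mul_sub, mul_div_cancel₀ _ hn.ne']

end Breakpoints

theorem gateScore_add_le_of_mem_unifInterval {n : ℕ} {j k₀ : Fin n} {ε x : ℝ} (hε : 0 ≤ ε)
    (hx : x ∈ Icc (0 : ℝ) 1 \ nearBreakpoints n ε) (hk₀ : x ∈ unifInterval n k₀) (hj : j ≠ k₀) :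
    gateScore j (n * x) + 2 * (n * ε) ≤ gateScore k₀ (n * x) := by
  have hm : 0 ≤ (n : ℝ) * ε := by positivity
  have hlo := le_mul_of_mem_unifInterval hk₀
  rcases lt_or_gt_of_ne (Fin.val_ne_of_ne hj) with hlt | hgt
  · have hfar := mul_le_abs_sub_of_notMem_nearBreakpoints hx.2 hx.1
      (Finset.mem_Ico.2 ⟨by omega, k₀.isLt⟩)
    rw [abs_of_nonneg (sub_nonneg.2 hlo)] at hfar
    exact gateScore_add_le_of_lt hm hlt (by linarith)
  · have hk₀' : (k₀ : ℕ) + 1 < n := by omega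
    have hhi := mul_lt_of_mem_unifInterval hk₀ hk₀'
    have hfar := mul_le_abs_sub_of_notMem_nearBreakpoints hx.2 hx.1
      (Finset.mem_Ico.2 ⟨by omega, hk₀'⟩)
    rw [Nat.cast_succ, abs_of_neg (by linarith)] at hfar
    exact gateScore_add_le_of_gt hm hgt (by linarith)

section Parameters

variable {n l : ℕ} {k : Fin n} {ε x : ℝ}

def gateIntercept (l : ℕ) (k : Fin n) : ℝ := -(l * (k * (k + 1)))

def gateSlope (n l : ℕ) (k : Fin n) : ℝ := l * (2 * n * k)

theorem softmaxGate1_gateIntercept_gateSlope :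
    softmaxGate1 (gateIntercept l) (gateSlope n l) k x =
      exp (l * gateScore k (n * x)) / ∑ j : Fin n, exp (l * gateScore j (n * x)) := by
  have h : ∀ j : Fin n, gateIntercept l j + gateSlope n l j * x = l * gateScore j (n * x) :=
    fun j => by unfold gateIntercept gateSlope gateScore; ring
  simp only [softmaxGate1, h]

theorem abs_softmaxGate1_sub_indicator_le (hε : 0 ≤ ε)
    (hx : x ∈ Icc (0 : ℝ) 1 \ nearBreakpoints n ε) (l : ℕ) (k : Fin n) :
    |softmaxGate1 (gateIntercept l) (gateSlope n l) k x -
        (unifInterval n k).indicator (fun _ => 1) x| ≤ n * exp (-(l * (2 * (n * ε)))) := by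
  have : NeZero n := ⟨k.pos.ne'⟩
  obtain ⟨k₀, hk₀⟩ := exists_mem_unifInterval (n := n) hx.1
  have hgap : ∀ j ≠ k₀, l * gateScore j (n * x) + l * (2 * (n * ε)) ≤ l * gateScore k₀ (n * x) :=
    fun j hj => by
      rw [← mul_add]
      exact mul_le_mul_of_nonneg_left
        (gateScore_add_le_of_mem_unifInterval hε hx hk₀ hj) l.cast_nonneg
  rw [softmaxGate1_gateIntercept_gateSlope, indicator_unifInterval_eq_ite hk₀]
  simpa only [Fintype.card_fin] using abs_exp_div_sum_exp_sub_ite_le_of_gap hgap k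

end Parameters

theorem softmax_gate_almost_uniform_indicators_general (n : ℕ) :
    ∃ a b : ℕ → Fin n → ℝ,
      ∀ δ : ℝ, 0 < δ →
        ∃ B : Set ℝ, B ⊆ Set.Icc (0 : ℝ) 1 ∧ MeasurableSet B ∧
          volume B < ENNReal.ofReal δ ∧
          ∀ k : Fin n,
            TendstoUniformlyOn (fun (l : ℕ) (x : ℝ) => softmaxGate1 (a l) (b l) k x)
              (Set.indicator (unifInterval n k) fun _ => (1 : ℝ)) atTop
              (Set.Icc (0 : ℝ) 1 \ B) := by
  refine ⟨gateIntercept, gateSlope n, fun δ hδ => ?_⟩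
  have hε : 0 < δ / (2 * (n + 1)) := by positivity
  refine ⟨nearBreakpoints n _, inter_subset_left, measurableSet_nearBreakpoints,
    volume_nearBreakpoints_lt hδ, fun k => ?_⟩
  have hn : (0 : ℝ) < n := by exact_mod_cast k.pos
  have hdecay : Tendsto (fun l : ℕ => n * exp (-(l * (2 * (n * (δ / (2 * (n + 1)))))))) atTop
      (𝓝 0) := by
    simpa only [mul_zero, Function.comp_def] using (tendsto_exp_neg_atTop_nhds_zero.comp
      (tendsto_natCast_atTop_atTop.atTop_mul_const (by positivity))).const_mul (n : ℝ)
  refine tendstoUniformlyOn_of_dist_le hdecay fun l x hx => ?_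
  rw [dist_comm, Real.dist_eq]
  exact abs_softmaxGate1_sub_indicator_le hε.le hx l k

/-- For each `n`, there is a sequence of soft-max gating parameter vectors
on `ℝ` whose gates converge almost uniformly on `[0,1]` to the indicators of the intervals
of the uniform partition of `[0,1]` into `n` pieces, simultaneously for all `k ∈ [n]`. -/
theorem softmax_gate_almost_uniform_indicators (n : ℕ) (hn : 0 < n) :
    ∃ a b : ℕ → Fin n → ℝ,
      ∀ δ : ℝ, 0 < δ →
        ∃ B : Set ℝ, B ⊆ Set.Icc (0 : ℝ) 1 ∧ MeasurableSet B ∧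
          volume B < ENNReal.ofReal δ ∧
          ∀ k : Fin n,
            TendstoUniformlyOn (fun (l : ℕ) (x : ℝ) => softmaxGate1 (a l) (b l) k x)
              (Set.indicator (unifInterval n k) fun _ => (1 : ℝ)) atTop
              (Set.Icc (0 : ℝ) 1 \ B) :=
  softmax_gate_almost_uniform_indicators_general n
end

section
/- For each n ∈ ℕ there exists a sequence of soft-max gating parameter vectors {γ_l}_{l∈ℕ} ⊂ ℝ^n × ℝ^n such that for every k ∈ [n], Gate_k(x;γ_l) → 1_{I_k^n}(x) as l → ∞ for λ-almost every x ∈ [0,1], where 1_{I_k^n} is the indicator function of the interval I_k^n of the uniform partition of [0,1] into n intervals. -/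
open MeasureTheory Filter Finset

/-! Scaling the parameters of a soft-max gate by `t → ∞` drives it to the indicator of the
unique maximiser of the scores `a_j + b_j x`. With `b_j = n j` and `a_j = -j (j + 1) / 2` the scores
are `j y - j (j + 1) / 2` with `y = n x`; the lines of consecutive indices `j - 1`, `j` cross exactly
at `y = j`, so for `y ∈ (m, m + 1)` the unique maximiser is `m = ⌊n x⌋₊`, the index of the partition
interval containing `x`. The exceptional points `j / n` form a null set. -/
open Topology

section Softmax

variable {ι : Type*} [DecidableEq ι]

theorem tendsto_exp_mul_sub_of_lt (s : ι → ℝ) {k₀ : ι} (hmax : ∀ j ≠ k₀, s j < s k₀) (j : ι) :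
    Tendsto (fun t : ℝ => Real.exp (t * (s j - s k₀))) atTop
      (𝓝 (if j = k₀ then 1 else 0)) := by
  split_ifs with hj
  · simp [hj]
  · exact Real.tendsto_exp_atBot.comp
      (tendsto_id.atTop_mul_const_of_neg (sub_neg.mpr (hmax j hj)))

theorem tendsto_softmaxGate1_smul [Fintype ι] {a b : ι → ℝ} {x : ℝ} {k₀ : ι}
    (hmax : ∀ j ≠ k₀, a j + b j * x < a k₀ + b k₀ * x) (k : ι) :
    Tendsto (fun t : ℝ => softmaxGate1 (t • a) (t • b) k x) atTop
      (𝓝 (if k = k₀ then 1 else 0)) := by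
  set s : ι → ℝ := fun j => a j + b j * x
  have hgate : ∀ t : ℝ, softmaxGate1 (t • a) (t • b) k x
      = Real.exp (t * (s k - s k₀)) / ∑ j, Real.exp (t * (s j - s k₀)) := by
    intro t
    simp only [mul_sub, Real.exp_sub, ← Finset.sum_div,
      div_div_div_cancel_right₀ (Real.exp_ne_zero _)]
    simp only [softmaxGate1, s, Pi.smul_apply, smul_eq_mul, mul_add, mul_assoc]
  have hsum := tendsto_finsetSum univ fun j _ => tendsto_exp_mul_sub_of_lt s hmax j
  rw [Finset.sum_ite_eq' univ k₀, if_pos (mem_univ _)] at hsum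
  have hlim := (tendsto_exp_mul_sub_of_lt s hmax k).div hsum one_ne_zero
  rw [div_one] at hlim
  exact hlim.congr fun t => (hgate t).symm

end Softmax

noncomputable def gridScore (y : ℝ) (j : ℕ) : ℝ := j * y - j * (j + 1) / 2

theorem gridScore_lt_gridScore {y : ℝ} {m j : ℕ} (hm : (m : ℝ) < y) (hm' : y < m + 1)
    (hj : j ≠ m) : gridScore y j < gridScore y m := by
  have hdiff : gridScore y m - gridScore y j = (m - j) * (2 * y - (m + j + 1)) / 2 := by
    unfold gridScore; ring
  have hpos : 0 < ((m : ℝ) - j) * (2 * y - (m + j + 1)) := by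
    rcases hj.lt_or_gt with h | h
    · have h' : (j : ℝ) + 1 ≤ m := by exact_mod_cast h
      nlinarith
    · have h' : (m : ℝ) + 1 ≤ j := by exact_mod_cast h
      nlinarith
  linarith

theorem mem_unifInterval_iff {n : ℕ} {x : ℝ} (hx₀ : 0 ≤ x) (hx₁ : x < 1) (j : Fin n) :
    x ∈ unifInterval n j ↔ (j : ℕ) = ⌊n * x⌋₊ := by
  have hn : (0 : ℝ) < n := by exact_mod_cast j.pos
  have hIco : x ∈ unifInterval n j ↔ x ∈ Set.Ico ((j : ℝ) / n) (((j : ℝ) + 1) / n) := by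
    unfold unifInterval
    split_ifs with hlast
    · have h1 : ((j : ℝ) + 1) / n = 1 := by rw [div_eq_one_iff_eq hn.ne']; exact_mod_cast hlast
      simp only [Set.mem_Icc, Set.mem_Ico, h1]
      exact ⟨fun h => ⟨h.1, hx₁⟩, fun h => ⟨h.1, hx₁.le⟩⟩
    · rfl
  rw [hIco, eq_comm, Nat.floor_eq_iff (by positivity), Set.mem_Ico, div_le_iff₀ hn,
    lt_div_iff₀ hn, mul_comm x]

theorem ae_ne_natCast_div (n : ℕ) : ∀ᵐ x : ℝ, ∀ m : ℕ, x ≠ m / n := by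
  simpa only [Set.mem_range, not_exists, ne_comm] using
    (Set.countable_range fun m : ℕ => (m : ℝ) / n).ae_notMem volume

theorem natFloor_lt_mul_of_ne_natCast_div {n : ℕ} {x : ℝ} (hn : 0 < n) (hx₀ : 0 ≤ x)
    (hx : ∀ m : ℕ, x ≠ m / n) : (⌊n * x⌋₊ : ℝ) < n * x := by
  have hn' : (0 : ℝ) < n := by exact_mod_cast hn
  refine (Nat.floor_le (by positivity)).lt_of_ne fun h => hx ⌊n * x⌋₊ ?_
  rw [h]; field_simp

theorem softmax_gate_ae_indicators_general (n : ℕ) :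
    ∃ a b : ℕ → Fin n → ℝ,
      ∀ k : Fin n,
        ∀ᵐ x ∂(volume.restrict (Set.Icc (0 : ℝ) 1)),
          Tendsto (fun l : ℕ => softmaxGate1 (a l) (b l) k x) atTop
            (nhds (Set.indicator (unifInterval n k) (fun _ => (1 : ℝ)) x)) := by
  refine ⟨fun l j => (l : ℝ) • -((j : ℝ) * (j + 1) / 2), fun l j => (l : ℝ) • (n * j), ?_⟩
  intro k
  have hn : 0 < n := k.pos
  filter_upwards [ae_restrict_mem measurableSet_Icc, ae_restrict_of_ae (ae_ne_natCast_div n)]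
    with x ⟨hx₀, hx₁⟩ hx
  have hx₁' : x < 1 := hx₁.lt_of_ne fun h => hx n (by rw [h, div_self (by positivity)])
  set m := ⌊n * x⌋₊
  have hlow : (m : ℝ) < n * x := natFloor_lt_mul_of_ne_natCast_div hn hx₀ hx
  have hhigh : n * x < m + 1 := Nat.lt_floor_add_one _
  have hmn : m < n := Nat.floor_lt (by positivity) |>.mpr (by nlinarith)
  have hmax : ∀ j ≠ (⟨m, hmn⟩ : Fin n), -((j : ℝ) * (j + 1) / 2) + n * j * x
      < -((m : ℝ) * (m + 1) / 2) + n * m * x := by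
    intro j hj
    have := gridScore_lt_gridScore hlow hhigh (Fin.val_ne_of_ne hj)
    unfold gridScore at this
    linarith
  have hind : Set.indicator (unifInterval n k) (fun _ => (1 : ℝ)) x
      = if k = ⟨m, hmn⟩ then 1 else 0 := by
    simp only [Set.indicator, mem_unifInterval_iff hx₀ hx₁', Fin.ext_iff]
    rfl
  rw [hind]
  exact (tendsto_softmaxGate1_smul hmax k).comp tendsto_natCast_atTop_atTop

/-- For each `n`, there is a sequence of soft-max gating parameter vectors
on `ℝ` whose gates converge λ-almost everywhere on `[0,1]` to the indicators of the
intervals of the uniform partition of `[0,1]` into `n` pieces. -/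
theorem softmax_gate_ae_indicators (n : ℕ) (hn : 0 < n) :
    ∃ a b : ℕ → Fin n → ℝ,
      ∀ k : Fin n,
        ∀ᵐ x ∂(volume.restrict (Set.Icc (0 : ℝ) 1)),
          Tendsto (fun l : ℕ => softmaxGate1 (a l) (b l) k x) atTop
            (nhds (Set.indicator (unifInterval n k) (fun _ => (1 : ℝ)) x)) :=
  softmax_gate_ae_indicators_general n
end
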